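/- arXiv:2507.09032 — 2 statements merged into one kernel-verified Lean document; each statement's English description precedes it below -/
import Mathlib

section
/- (Analytic form of the joint probability, second part of Lemma 5.1.) Fix Y ∈ ℤ, integers 1 ≤ r ≤ D, 0 ≤ d ≤ D, and (z_1,…,z_d) ∈ ℤ^d with counts (n1, n2, n3), so d = n1+n2+n3 and D−d is the number of unobserved draws. Then P(os_r(Z) = Y ∧ Z_1 = z_1, …, Z_d = z_d) = Q · ∏_{t=1}^d f(z_t), where: Q = 0 if n1 ≥ r or n3 ≥ D−r+1; otherwise, Q = F^{(r−n1−n2, D−d)}(Y) − F^{(r−n1, D−d)}(Y−1) if n2 < min(r−n1, D−n3−r+1); Q = 1 − F^{(r−n1, D−d)}(Y−1) if r−n1 ≤ n2 < D−n3−r+1; Q = F^{(r−n1−n2, D−d)}(Y) if D−n3−r+1 ≤ n2 < r−n1; and Q = 1 if n2 ≥ max(r−n1, D−n3−r+1). -/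
open MeasureTheory

/-- The measure on ℤ with mass function `f`. -/
noncomputable def parentMeasure (f : ℤ → ℝ) : Measure ℤ :=
  Measure.count.withDensity fun z => ENNReal.ofReal (f z)

/-- `P f D S` is the probability of the event `S` under the `D`-fold product of the
measure on ℤ with pmf `f`, i.e. the law of `D` i.i.d. draws `Z = (Z_1, …, Z_D)` from `f`. -/
noncomputable def P (f : ℤ → ℝ) (D : ℕ) (S : Set (Fin D → ℤ)) : ℝ :=
  (Measure.pi (fun _ : Fin D => parentMeasure f) S).toReal

/-- The CDF of `f`: `F(y) = ∑_{t ≤ y} f(t)`. -/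
noncomputable def Fcdf (f : ℤ → ℝ) (y : ℤ) : ℝ := ∑' z : {t : ℤ // t ≤ y}, f z.1

/-- The number of entries of `z` that are `≤ y`. -/
def countLe {n : ℕ} (z : Fin n → ℤ) (y : ℤ) : ℕ :=
  (Finset.univ.filter fun i => z i ≤ y).card

/-- `osEq r z Y` says that the `r`-th smallest entry of `z` (counting multiplicity)
equals `Y`: the `r`-th order statistic is `≤ Y` but not `≤ Y - 1`. -/
def osEq {n : ℕ} (r : ℕ) (z : Fin n → ℤ) (Y : ℤ) : Prop :=
  r ≤ countLe z Y ∧ countLe z (Y - 1) < r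

/-- The order-statistic CDF `F^{(a,m)}(y) = ∑_{t=a}^{m} (m choose t) F(y)^t (1−F(y))^{m−t}`. -/
noncomputable def osCDF (f : ℤ → ℝ) (a m : ℕ) (y : ℤ) : ℝ :=
  ∑ t ∈ Finset.Icc a m, (m.choose t : ℝ) * Fcdf f y ^ t * (1 - Fcdf f y) ^ (m - t)

/-!
Split the `D` draws into the `d` observed ones and the `D - d` unobserved ones: the product
measure factors, and the event becomes `{z} ×ˢ E`, so its probability is `∏ f(z_t)` times the
probability of `E` under the `(D - d)`-fold product. The prefix `z` already has `n1 + n2`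
entries `≤ Y` and `n1` entries `≤ Y - 1`, so `E` says that at least `r - n1 - n2` unobserved
draws are `≤ Y` but fewer than `r - n1` are `≤ Y - 1`. The second event lies inside the first,
and the number of draws in a fixed set is binomial, so `P(E)` is the difference of two
order-statistic CDFs. The four cases of `Q` are this difference when a threshold is `0`
(`F^{(0,m)} = 1`) or exceeds `m` (`F^{(a,m)} = 0`).
-/
open Finset

section Binomial

variable {ι α : Type*} [Fintype ι] {p : α → Prop} [DecidablePred p]

lemma setOf_filter_eq_eq_univ_pi (A : Finset ι) :
    {τ : ι → α | univ.filter (fun i => p (τ i)) = A}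
      = Set.univ.pi fun i => {x | p x ↔ i ∈ A} := by
  ext τ
  simp [Finset.ext_iff]

lemma setOf_card_filter_eq_eq_biUnion (k : ℕ) :
    {τ : ι → α | #(univ.filter fun i => p (τ i)) = k}
      = ⋃ A ∈ (univ : Finset ι).powersetCard k, {τ | univ.filter (fun i => p (τ i)) = A} := by
  ext τ
  simp

variable [MeasurableSpace α] {μ : Measure α} [IsProbabilityMeasure μ]

lemma measurableSet_setOf_filter_eq (hp : MeasurableSet {x | p x}) (A : Finset ι) :
    MeasurableSet {τ : ι → α | univ.filter (fun i => p (τ i)) = A} := by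
  rw [setOf_filter_eq_eq_univ_pi]
  refine .univ_pi fun i => ?_
  by_cases hi : i ∈ A
  · simpa [hi] using hp
  · simp only [hi, iff_false]
    exact hp.compl

lemma measureReal_pi_filter_eq (hp : MeasurableSet {x | p x}) (A : Finset ι) :
    (Measure.pi fun _ : ι => μ).real {τ | univ.filter (fun i => p (τ i)) = A}
      = μ.real {x | p x} ^ #A * (1 - μ.real {x | p x}) ^ (Fintype.card ι - #A) := by
  classical
  rw [setOf_filter_eq_eq_univ_pi, measureReal_def, Measure.pi_pi, ENNReal.toReal_prod]
  have hfactor (i : ι) : μ.real {x | p x ↔ i ∈ A}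
      = if i ∈ A then μ.real {x | p x} else 1 - μ.real {x | p x} := by
    by_cases hi : i ∈ A
    · simp [hi]
    · simp [hi, ← probReal_compl_eq_one_sub hp, Set.compl_ofPred]
  simp only [← measureReal_def, hfactor]
  rw [Finset.prod_ite, Finset.prod_const, Finset.prod_const, Finset.filter_mem_eq_inter,
    Finset.univ_inter, Finset.filter_not, Finset.filter_mem_eq_inter, Finset.univ_inter,
    Finset.card_univ_sdiff]

lemma measurableSet_setOf_card_filter_eq (hp : MeasurableSet {x | p x}) (k : ℕ) :
    MeasurableSet {τ : ι → α | #(univ.filter fun i => p (τ i)) = k} := by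
  rw [setOf_card_filter_eq_eq_biUnion]
  exact .biUnion (Finset.countable_toSet _) fun A _ => measurableSet_setOf_filter_eq hp A

lemma measureReal_pi_card_filter_eq (hp : MeasurableSet {x | p x}) (k : ℕ) :
    (Measure.pi fun _ : ι => μ).real {τ | #(univ.filter fun i => p (τ i)) = k}
      = (Fintype.card ι).choose k * μ.real {x | p x} ^ k
          * (1 - μ.real {x | p x}) ^ (Fintype.card ι - k) := by
  have hdisj : Set.PairwiseDisjoint ↑((univ : Finset ι).powersetCard k)
      fun A => {τ : ι → α | univ.filter (fun i => p (τ i)) = A} := fun A _ B _ hAB =>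
    Set.disjoint_left.mpr fun τ hA hB => hAB (hA.symm.trans hB)
  rw [setOf_card_filter_eq_eq_biUnion, measureReal_biUnion_finset hdisj fun A _ =>
      measurableSet_setOf_filter_eq hp A,
    Finset.sum_congr rfl fun A hA => by
      rw [measureReal_pi_filter_eq hp, (Finset.mem_powersetCard_univ.mp hA)],
    Finset.sum_const, Finset.card_powersetCard, Finset.card_univ, nsmul_eq_mul, mul_assoc]

lemma measureReal_pi_le_card_filter (hp : MeasurableSet {x | p x}) (a : ℕ) :
    (Measure.pi fun _ : ι => μ).real {τ | a ≤ #(univ.filter fun i => p (τ i))}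
      = ∑ k ∈ Icc a (Fintype.card ι), (Fintype.card ι).choose k * μ.real {x | p x} ^ k
          * (1 - μ.real {x | p x}) ^ (Fintype.card ι - k) := by
  have hunion : {τ : ι → α | a ≤ #(univ.filter fun i => p (τ i))}
      = ⋃ k ∈ Icc a (Fintype.card ι), {τ | #(univ.filter fun i => p (τ i)) = k} := by
    ext τ
    simpa using fun _ => card_le_univ _
  have hdisj : Set.PairwiseDisjoint ↑(Icc a (Fintype.card ι))
      fun k => {τ : ι → α | #(univ.filter fun i => p (τ i)) = k} := fun k _ l _ hkl =>
    Set.disjoint_left.mpr fun τ hk hl => hkl (hk.symm.trans hl)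
  rw [hunion, measureReal_biUnion_finset hdisj fun k _ => measurableSet_setOf_card_filter_eq hp k]
  exact Finset.sum_congr rfl fun k _ => measureReal_pi_card_filter_eq hp k

end Binomial

section ParentMeasure

variable {f : ℤ → ℝ}

lemma parentMeasure_real_apply (hf0 : ∀ z, 0 ≤ f z) (hf : Summable f) (s : Set ℤ) :
    (parentMeasure f).real s = ∑' x : s, f x := by
  rw [measureReal_def, parentMeasure, withDensity_apply _ (Set.to_countable s).measurableSet,
    lintegral_countable _ (Set.to_countable s)]
  simp only [Measure.count_singleton, mul_one]
  rw [← ENNReal.ofReal_tsum_of_nonneg (f := fun x : s => f x) (fun _ => hf0 _) (hf.subtype s),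
    ENNReal.toReal_ofReal (tsum_nonneg fun _ => hf0 _)]

lemma isProbabilityMeasure_parentMeasure (hf0 : ∀ z, 0 ≤ f z) (hf1 : HasSum f 1) :
    IsProbabilityMeasure (parentMeasure f) := by
  refine ⟨(ENNReal.toReal_eq_one_iff _).mp ?_⟩
  rw [← measureReal_def, parentMeasure_real_apply hf0 hf1.summable, tsum_univ, hf1.tsum_eq]

lemma parentMeasure_real_singleton (hf0 : ∀ z, 0 ≤ f z) (hf : Summable f) (x : ℤ) :
    (parentMeasure f).real {x} = f x := by
  rw [parentMeasure_real_apply hf0 hf, tsum_singleton]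

lemma parentMeasure_real_setOf_le (hf0 : ∀ z, 0 ≤ f z) (hf : Summable f) (y : ℤ) :
    (parentMeasure f).real {x | x ≤ y} = Fcdf f y :=
  parentMeasure_real_apply hf0 hf _

end ParentMeasure

lemma osCDF_zero (f : ℤ → ℝ) (m : ℕ) (y : ℤ) : osCDF f 0 m y = 1 := by
  have h := add_pow (Fcdf f y) (1 - Fcdf f y) m
  rw [add_sub_cancel, one_pow] at h
  rw [osCDF, ← Nat.range_succ_eq_Icc_zero]
  exact (Finset.sum_congr rfl fun t _ => by ring).trans h.symm

lemma osCDF_of_lt (f : ℤ → ℝ) {a m : ℕ} (h : m < a) (y : ℤ) : osCDF f a m y = 0 := by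
  rw [osCDF, Finset.Icc_eq_empty (by omega), Finset.sum_empty]

lemma countLe_mono {n : ℕ} (q : Fin n → ℤ) : Monotone (countLe q) := fun _ _ hy =>
  Finset.card_le_card fun _ hi => by
    simp only [Finset.mem_filter, Finset.mem_univ, true_and] at hi ⊢
    exact hi.trans hy

lemma countLe_eq_card_lt_add_card_eq {n : ℕ} (z : Fin n → ℤ) (Y : ℤ) :
    countLe z Y = #(univ.filter fun t => z t < Y) + #(univ.filter fun t => z t = Y) := by
  rw [countLe, ← Finset.card_union_of_disjoint (Finset.disjoint_filter.mpr fun _ _ h => h.ne),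
    ← Finset.filter_or]
  simp_rw [le_iff_lt_or_eq]

lemma countLe_sub_one {n : ℕ} (z : Fin n → ℤ) (Y : ℤ) :
    countLe z (Y - 1) = #(univ.filter fun t => z t < Y) := by
  simp_rw [countLe, Int.le_sub_one_iff]

lemma countLe_add_card_gt {n : ℕ} (z : Fin n → ℤ) (Y : ℤ) :
    countLe z Y + #(univ.filter fun t => Y < z t) = n := by
  simp_rw [countLe, ← not_le]
  rw [Finset.card_filter_add_card_filter_not, Finset.card_univ, Fintype.card_fin]

section OrderStatistic

variable {f : ℤ → ℝ}

lemma measureReal_pi_le_countLe (hf0 : ∀ z, 0 ≤ f z) (hf1 : HasSum f 1) (m a : ℕ) (y : ℤ) :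
    (Measure.pi fun _ : Fin m => parentMeasure f).real {τ | a ≤ countLe τ y}
      = osCDF f a m y := by
  have := isProbabilityMeasure_parentMeasure hf0 hf1
  have h := measureReal_pi_le_card_filter (ι := Fin m) (μ := parentMeasure f)
    (p := (· ≤ y)) measurableSet_Iic a
  rwa [Fintype.card_fin, parentMeasure_real_setOf_le hf0 hf1.summable] at h

/-- No side conditions are needed: truncated subtraction turns both thresholds into `0` when
`r ≤ b`, and both terms into `0` when `r` exceeds `b + e + m`. -/
lemma measureReal_pi_shifted_osEq (hf0 : ∀ z, 0 ≤ f z) (hf1 : HasSum f 1)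
    (b e m r : ℕ) (Y : ℤ) :
    (Measure.pi fun _ : Fin m => parentMeasure f).real
        {q | r ≤ b + e + countLe q Y ∧ b + countLe q (Y - 1) < r}
      = osCDF f (r - b - e) m Y - osCDF f (r - b) m (Y - 1) := by
  have := isProbabilityMeasure_parentMeasure hf0 hf1
  have hsub : {q : Fin m → ℤ | r - b ≤ countLe q (Y - 1)} ⊆ {q | r - b - e ≤ countLe q Y} :=
    fun q hq => by
      have := countLe_mono q (Int.sub_le_self Y zero_le_one)
      simp only [Set.mem_ofPred_eq] at hq ⊢
      omega
  have hdiff : {q : Fin m → ℤ | r ≤ b + e + countLe q Y ∧ b + countLe q (Y - 1) < r}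
      = {q | r - b - e ≤ countLe q Y} \ {q | r - b ≤ countLe q (Y - 1)} := by
    ext q
    simp only [Set.mem_ofPred_eq, Set.mem_sdiff, not_le]
    omega
  rw [hdiff, measureReal_sdiff hsub .of_discrete, measureReal_pi_le_countLe hf0 hf1,
    measureReal_pi_le_countLe hf0 hf1]

end OrderStatistic

section Append

def appendEquiv (α : Type*) [MeasurableSpace α] {d D : ℕ} (hd : d ≤ D) :
    (Fin d → α) × (Fin (D - d) → α) ≃ᵐ (Fin D → α) :=
  (MeasurableEquiv.sumPiEquivProdPi fun _ => α).symm.trans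
    (MeasurableEquiv.piCongrLeft (fun _ => α)
      (finSumFinEquiv.trans (finCongr (Nat.add_sub_of_le hd))))

variable {α : Type*} [MeasurableSpace α] {d D : ℕ}

lemma appendEquiv_apply_sum (hd : d ≤ D) (p : Fin d → α) (q : Fin (D - d) → α)
    (i : Fin d ⊕ Fin (D - d)) :
    appendEquiv α hd (p, q) (finSumFinEquiv.trans (finCongr (Nat.add_sub_of_le hd)) i)
      = Sum.elim p q i := by
  rcases i with t | j
  · exact Equiv.piCongrLeft_sumInl (fun _ => α) _ p q t
  · exact Equiv.piCongrLeft_sumInr (fun _ => α) _ p q j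

lemma appendEquiv_apply_castLE (hd : d ≤ D) (p : Fin d → α) (q : Fin (D - d) → α) (t : Fin d) :
    appendEquiv α hd (p, q) (Fin.castLE hd t) = p t := by
  have h : finSumFinEquiv.trans (finCongr (Nat.add_sub_of_le hd)) (.inl t) = Fin.castLE hd t := by
    ext
    simp
  rw [← h, appendEquiv_apply_sum, Sum.elim_inl]

lemma countLe_appendEquiv (hd : d ≤ D) (p : Fin d → ℤ) (q : Fin (D - d) → ℤ) (y : ℤ) :
    countLe (appendEquiv ℤ hd (p, q)) y = countLe p y + countLe q y := by
  simp only [countLe, Finset.card_filter]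
  rw [← Equiv.sum_comp (finSumFinEquiv.trans (finCongr (Nat.add_sub_of_le hd))),
    Fintype.sum_sum_type]
  simp only [appendEquiv_apply_sum, Sum.elim_inl, Sum.elim_inr]

lemma measurePreserving_appendEquiv (μ : Measure α) [SigmaFinite μ] (hd : d ≤ D) :
    MeasurePreserving (appendEquiv α hd)
      ((Measure.pi fun _ : Fin d => μ).prod (Measure.pi fun _ : Fin (D - d) => μ))
      (Measure.pi fun _ : Fin D => μ) :=
  (measurePreserving_piCongrLeft (fun _ => μ) _).comp
    (measurePreserving_sumPiEquivProdPi_symm (fun _ => μ))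

lemma measureReal_pi_and_prefix_eq (μ : Measure α) [SigmaFinite μ] (hd : d ≤ D)
    (A : (Fin D → α) → Prop) (z : Fin d → α) :
    (Measure.pi fun _ : Fin D => μ).real {ω | A ω ∧ ∀ t, ω (Fin.castLE hd t) = z t}
      = (∏ t, μ.real {z t})
          * (Measure.pi fun _ : Fin (D - d) => μ).real {q | A (appendEquiv α hd (z, q))} := by
  have hpre : appendEquiv α hd ⁻¹' {ω | A ω ∧ ∀ t, ω (Fin.castLE hd t) = z t}
      = {z} ×ˢ {q | A (appendEquiv α hd (z, q))} := by
    ext ⟨p, q⟩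
    simp only [Set.mem_preimage, Set.mem_ofPred_eq, Set.mem_prod, Set.mem_singleton_iff,
      appendEquiv_apply_castLE, ← funext_iff]
    constructor
    · rintro ⟨hA, rfl⟩
      exact ⟨rfl, hA⟩
    · rintro ⟨rfl, hA⟩
      exact ⟨hA, rfl⟩
  rw [measureReal_def, ← (measurePreserving_appendEquiv μ hd).measure_preimage_equiv,
    ← measureReal_def, hpre, measureReal_prod_prod, measureReal_def, Measure.pi_singleton,
    ENNReal.toReal_prod]
  rfl

end Append

theorem order_statistic_joint_probability_form_general
    (f : ℤ → ℝ) (hf0 : ∀ z, 0 ≤ f z) (hf1 : HasSum f 1)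
    (Y : ℤ) (D r d : ℕ) (hd : d ≤ D)
    (z : Fin d → ℤ) :
    P f D {ω | osEq r ω Y ∧ ∀ t : Fin d, ω (Fin.castLE hd t) = z t}
      = (let n1 := (Finset.univ.filter fun t => z t < Y).card
         let n2 := (Finset.univ.filter fun t => z t = Y).card
         let n3 := (Finset.univ.filter fun t => Y < z t).card
         if r ≤ n1 ∨ D - r + 1 ≤ n3 then 0
         else if n2 < min (r - n1) (D - n3 - r + 1) then
           osCDF f (r - n1 - n2) (D - d) Y - osCDF f (r - n1) (D - d) (Y - 1)
         else if r - n1 ≤ n2 ∧ n2 < D - n3 - r + 1 then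
           1 - osCDF f (r - n1) (D - d) (Y - 1)
         else if D - n3 - r + 1 ≤ n2 ∧ n2 < r - n1 then
           osCDF f (r - n1 - n2) (D - d) Y
         else 1) * ∏ t, f (z t) := by
  have := isProbabilityMeasure_parentMeasure hf0 hf1
  dsimp only
  set n1 := #(univ.filter fun t => z t < Y)
  set n2 := #(univ.filter fun t => z t = Y)
  set n3 := #(univ.filter fun t => Y < z t)
  have hcount : countLe z Y = n1 + n2 := countLe_eq_card_lt_add_card_eq z Y
  have hcount' : countLe z (Y - 1) = n1 := countLe_sub_one z Y
  have hsum : n1 + n2 + n3 = d := hcount ▸ countLe_add_card_gt z Y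
  have hevent : {q | osEq r (appendEquiv ℤ hd (z, q)) Y}
      = {q | r ≤ n1 + n2 + countLe q Y ∧ n1 + countLe q (Y - 1) < r} := by
    simp only [osEq, countLe_appendEquiv, hcount, hcount']
  clear_value n1 n2 n3
  rw [P, ← measureReal_def, measureReal_pi_and_prefix_eq _ hd (fun ω => osEq r ω Y), hevent,
    measureReal_pi_shifted_osEq hf0 hf1,
    Finset.prod_congr rfl fun t _ => parentMeasure_real_singleton hf0 hf1.summable (z t),
    mul_comm]
  congr 1
  split_ifs with h0 h1 h2 h3
  · rcases h0 with h | h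
    · rw [Nat.sub_eq_zero_of_le h, Nat.zero_sub, osCDF_zero, osCDF_zero, sub_self]
    · rw [osCDF_of_lt f (by omega), osCDF_of_lt f (by omega), sub_self]
  · rfl
  · rw [Nat.sub_eq_zero_of_le (by omega), osCDF_zero]
  · rw [osCDF_of_lt f (a := r - n1) (by omega), sub_zero]
  · rw [Nat.sub_eq_zero_of_le (by omega), osCDF_zero, osCDF_of_lt f (by omega), sub_zero]

/-- **Lemma 5.1, second part** (analytic form of the joint probability): the joint
probability of observing the prefix `z ∈ ℤ^d` together with `os_r(Z) = Y` equals
`Q · ∏_t f(z_t)`, where `Q` is the case-defined expression in the counts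
`n1 = #{t : z_t < Y}`, `n2 = #{t : z_t = Y}`, `n3 = #{t : z_t > Y}`. -/
theorem order_statistic_joint_probability_form
    (f : ℤ → ℝ) (hf0 : ∀ z, 0 ≤ f z) (hf1 : HasSum f 1)
    (Y : ℤ) (D r d : ℕ) (hr1 : 1 ≤ r) (hrD : r ≤ D) (hd : d ≤ D)
    (z : Fin d → ℤ) :
    P f D {ω | osEq r ω Y ∧ ∀ t : Fin d, ω (Fin.castLE hd t) = z t}
      = (let n1 := (Finset.univ.filter fun t => z t < Y).card
         let n2 := (Finset.univ.filter fun t => z t = Y).card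
         let n3 := (Finset.univ.filter fun t => Y < z t).card
         if r ≤ n1 ∨ D - r + 1 ≤ n3 then 0
         else if n2 < min (r - n1) (D - n3 - r + 1) then
           osCDF f (r - n1 - n2) (D - d) Y - osCDF f (r - n1) (D - d) (Y - 1)
         else if r - n1 ≤ n2 ∧ n2 < D - n3 - r + 1 then
           1 - osCDF f (r - n1) (D - d) (Y - 1)
         else if D - n3 - r + 1 ≤ n2 ∧ n2 < r - n1 then
           osCDF f (r - n1 - n2) (D - d) Y
         else 1) * ∏ t, f (z t) :=
  order_statistic_joint_probability_form_general f hf0 hf1 Y D r d hd z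
end

section
/- (Joint probability recursion, Lemma C.2.) Fix Y ∈ ℤ, integers D ≥ 2, 1 ≤ r ≤ D, 1 ≤ d ≤ D, and (z_1,…,z_d) ∈ ℤ^d. Let Z_1, Z_2, … be i.i.d. with pmf f, and for D' ≤ D let os_{r'}(Z_{1:D'}) denote the r'-th smallest of the first D' coordinates. If z_d < Y, then: for r ≥ 2, P(Z_1 = z_1, …, Z_d = z_d ∧ os_r(Z_{1:D}) = Y) = f(z_d) · P(Z_1 = z_1, …, Z_{d−1} = z_{d−1} ∧ os_{r−1}(Z_{1:D−1}) = Y), while for r = 1 this probability is 0. If z_d > Y, then: for r ≤ D − 1, P(Z_1 = z_1, …, Z_d = z_d ∧ os_r(Z_{1:D}) = Y) = f(z_d) · P(Z_1 = z_1, …, Z_{d−1} = z_{d−1} ∧ os_r(Z_{1:D−1}) = Y), while for r = D this probability is 0. -/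
/-! Under the product measure the coordinate `d` is independent of the others, so pinning
`Z_d = z_d` factors out `f(z_d)` and leaves the law of the remaining `D - 1` coordinates.
Deleting an entry `z_d < Y` lowers both counts `#{Z ≤ Y}` and `#{Z ≤ Y - 1}` by one, so the rank
drops by one (and rank `1` is impossible, as `#{Z ≤ Y - 1} ≥ 1`); deleting an entry `z_d > Y`
changes neither count, so the rank is kept (and rank `D` is impossible, as `#{Z ≤ Y} ≤ D - 1`).
-/

open MeasureTheory

open Fin

instance parentMeasure.instSigmaFinite (f : ℤ → ℝ) : SigmaFinite (parentMeasure f) := by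
  unfold parentMeasure
  infer_instance

lemma parentMeasure_singleton (f : ℤ → ℝ) (x : ℤ) :
    parentMeasure f {x} = ENNReal.ofReal (f x) := by
  rw [parentMeasure, withDensity_apply _ (measurableSet_singleton x), lintegral_singleton,
    Measure.count_singleton, mul_one]

lemma Measure.pi_setOf_apply_mem_and_removeNth_mem {α : Type*} [MeasurableSpace α]
    (μ : Measure α) [SigmaFinite μ] {m : ℕ} (i : Fin (m + 1)) (A : Set α)
    (T : Set (Fin m → α)) :
    Measure.pi (fun _ => μ) {ω | ω i ∈ A ∧ i.removeNth ω ∈ T}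
      = μ A * Measure.pi (fun _ => μ) T := by
  rw [← Measure.prod_prod,
    ← (measurePreserving_piFinSuccAbove (fun _ => μ) i).measure_preimage_equiv]
  rfl

lemma P_setOf_apply_eq_and_removeNth_mem (f : ℤ → ℝ) {m : ℕ} (i : Fin (m + 1)) {x : ℤ}
    (hx : 0 ≤ f x) (T : Set (Fin m → ℤ)) :
    P f (m + 1) {ω | ω i = x ∧ i.removeNth ω ∈ T} = f x * P f m T := by
  have h := Measure.pi_setOf_apply_mem_and_removeNth_mem (parentMeasure f) i {x} T
  simp only [Set.mem_singleton_iff, parentMeasure_singleton] at h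
  rw [P, P, h, ENNReal.toReal_mul, ENNReal.toReal_ofReal hx]

lemma P_empty (f : ℤ → ℝ) (n : ℕ) : P f n ∅ = 0 := by
  simp [P]

lemma countLe_le {n : ℕ} (z : Fin n → ℤ) (y : ℤ) : countLe z y ≤ n :=
  (Finset.card_filter_le _ _).trans (Finset.card_fin n).le

lemma countLe_eq_ite_add_countLe_removeNth {m : ℕ} (i : Fin (m + 1)) (z : Fin (m + 1) → ℤ)
    (y : ℤ) : countLe z y = (if z i ≤ y then 1 else 0) + countLe (i.removeNth z) y := by
  simp only [countLe, Finset.card_filter]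
  exact Fin.sum_univ_succAbove (fun j => if z j ≤ y then 1 else 0) i

lemma not_osEq_zero {n : ℕ} (z : Fin n → ℤ) (Y : ℤ) : ¬ osEq 0 z Y :=
  fun h => Nat.not_lt_zero _ h.2

lemma not_osEq_of_lt {n r : ℕ} (hnr : n < r) (z : Fin n → ℤ) (Y : ℤ) : ¬ osEq r z Y :=
  fun h => (h.1.trans (countLe_le z Y)).not_gt hnr

lemma osEq_iff_osEq_removeNth_of_lt {m r : ℕ} (i : Fin (m + 1)) {z : Fin (m + 1) → ℤ} {Y : ℤ}
    (hz : z i < Y) : osEq r z Y ↔ osEq (r - 1) (i.removeNth z) Y := by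
  have hY := countLe_eq_ite_add_countLe_removeNth i z Y
  have hY₁ := countLe_eq_ite_add_countLe_removeNth i z (Y - 1)
  rw [if_pos hz.le] at hY
  rw [if_pos (by omega)] at hY₁
  unfold osEq
  omega

lemma osEq_iff_osEq_removeNth_of_gt {m r : ℕ} (i : Fin (m + 1)) {z : Fin (m + 1) → ℤ} {Y : ℤ}
    (hz : Y < z i) : osEq r z Y ↔ osEq r (i.removeNth z) Y := by
  have hY := countLe_eq_ite_add_countLe_removeNth i z Y
  have hY₁ := countLe_eq_ite_add_countLe_removeNth i z (Y - 1)
  rw [if_neg hz.not_ge] at hY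
  rw [if_neg (by omega)] at hY₁
  unfold osEq
  omega

lemma castLE_prefix_iff {m e : ℕ} (h : e + 1 ≤ m + 1) (z : Fin (e + 1) → ℤ)
    (ω : Fin (m + 1) → ℤ) :
    (∀ t : Fin (e + 1), ω (castLE h t) = z t) ↔
      ω ⟨e, by omega⟩ = z (last e) ∧
        ∀ t : Fin e, removeNth ⟨e, by omega⟩ ω (castLE (by omega) t) = z t.castSucc := by
  rw [forall_fin_succ', and_comm]
  refine and_congr Iff.rfl (forall_congr' fun t => ?_)
  rw [removeNth_apply, succAbove_of_castSucc_lt _ _ t.2]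
  rfl

lemma P_prefix_and_osEq_eq {m e : ℕ} (f : ℤ → ℝ) (hf0 : ∀ x, 0 ≤ f x) (h : e + 1 ≤ m + 1)
    (z : Fin (e + 1) → ℤ) {r r' : ℕ} {Y : ℤ}
    (hos : ∀ ω : Fin (m + 1) → ℤ, ω ⟨e, by omega⟩ = z (last e) →
      (osEq r ω Y ↔ osEq r' (removeNth ⟨e, by omega⟩ ω) Y)) :
    P f (m + 1) {ω | (∀ t : Fin (e + 1), ω (castLE h t) = z t) ∧ osEq r ω Y}
      = f (z (last e)) *
        P f m {ω | (∀ t : Fin e, ω (castLE (by omega) t) = z t.castSucc) ∧ osEq r' ω Y} := by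
  rw [← P_setOf_apply_eq_and_removeNth_mem f _ (hf0 _)]
  congr 1
  ext ω
  simp only [Set.mem_ofPred_eq, castLE_prefix_iff]
  constructor
  · rintro ⟨⟨hlast, hinit⟩, hr⟩
    exact ⟨hlast, hinit, (hos ω hlast).1 hr⟩
  · rintro ⟨hlast, hinit, hr⟩
    exact ⟨⟨hlast, hinit⟩, (hos ω hlast).2 hr⟩

/-- **Lemma C.2** (joint probability recursion): for i.i.d. draws with pmf `f`, a prefix
`z ∈ ℤ^d` whose last entry satisfies `z_d < Y` (resp. `z_d > Y`), the joint probability of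
observing the prefix together with `{os_r(Z_{1:D}) = Y}` factors out `f(z_d)` and reduces
to the analogous probability with rank `r−1` (resp. `r`) and order `D−1`, and vanishes
when `r = 1` (resp. `r = D`). -/
theorem joint_probability_recursion
    (f : ℤ → ℝ) (hf0 : ∀ z, 0 ≤ f z)
    (Y : ℤ) (D r d : ℕ)
    (hd1 : 1 ≤ d) (hdD : d ≤ D) (z : Fin d → ℤ) :
    (z ⟨d - 1, by omega⟩ < Y →
      ((2 ≤ r →
        P f D {ω | (∀ t : Fin d, ω (Fin.castLE hdD t) = z t) ∧ osEq r ω Y}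
          = f (z ⟨d - 1, by omega⟩) *
            P f (D - 1) {ω | (∀ t : Fin (d - 1),
                ω (Fin.castLE (by omega) t) = z (Fin.castLE (by omega) t)) ∧
              osEq (r - 1) ω Y}) ∧
       (r = 1 →
        P f D {ω | (∀ t : Fin d, ω (Fin.castLE hdD t) = z t) ∧ osEq r ω Y} = 0))) ∧
    (Y < z ⟨d - 1, by omega⟩ →
      ((r ≤ D - 1 →
        P f D {ω | (∀ t : Fin d, ω (Fin.castLE hdD t) = z t) ∧ osEq r ω Y}
          = f (z ⟨d - 1, by omega⟩) *
            P f (D - 1) {ω | (∀ t : Fin (d - 1),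
                ω (Fin.castLE (by omega) t) = z (Fin.castLE (by omega) t)) ∧
              osEq r ω Y}) ∧
       (r = D →
        P f D {ω | (∀ t : Fin d, ω (Fin.castLE hdD t) = z t) ∧ osEq r ω Y} = 0))) := by
  obtain ⟨m, rfl⟩ : ∃ m, D = m + 1 := ⟨D - 1, by omega⟩
  obtain ⟨e, rfl⟩ : ∃ e, d = e + 1 := ⟨d - 1, by omega⟩
  have hrec := fun r' => P_prefix_and_osEq_eq (r := r) (r' := r') (Y := Y) f hf0 hdD z
  refine ⟨fun hlt => ?_, fun hgt => ?_⟩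
  · have hsplit := hrec (r - 1) fun ω hω => osEq_iff_osEq_removeNth_of_lt _ (hω ▸ hlt)
    refine ⟨fun _ => hsplit, fun hr => ?_⟩
    rw [hsplit, hr, Nat.sub_self]
    simp only [not_osEq_zero, and_false, Set.ofPred_false, P_empty, mul_zero]
  · have hsplit := hrec r fun ω hω => osEq_iff_osEq_removeNth_of_gt _ (hω ▸ hgt)
    refine ⟨fun _ => hsplit, fun hr => ?_⟩
    rw [hsplit, hr]
    simp only [not_osEq_of_lt (Nat.lt_succ_self m), and_false, Set.ofPred_false, P_empty,
      mul_zero]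
end
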